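/- Let a ≡ 2 (mod 4) with a ≥ 2, and let n ≡ 0 (mod 4). Then with m = 2a+n+1 and x = (m−1)/4, the minimum of |a·x|_m, |(a+1)·x|_m, |(2a+1)·x|_m, |(3a+1)·x|_m, |n·x|_m equals (m−(2a+1))/4; consequently κ({a, a+1, 2a+1, 3a+1, n}) ≥ (m−(2a+1))/(4(2a+n+1)) where m = 2a+n+1. -/
import Mathlib


/-- `absMod y m` is the distance from `y` to the nearest multiple of `m`. -/
def absMod (y m : ℕ) : ℕ := min (y % m) (m - y % m)

/-- `S` is an `M`-set: no two (distinct) elements of `S` differ by an element of `M`. -/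
def isMSet (M S : Set ℕ) : Prop := ∀ x ∈ S, ∀ y ∈ S, x ≠ y → x - y ∉ M

/-- The Cantor--Gordon parameter κ(M). -/
noncomputable def kappa (M : Set ℕ) : ℝ :=
  sSup {q : ℝ | ∃ c m : ℕ, 0 < m ∧ Nat.Coprime c m ∧
    q = sInf {r : ℝ | ∃ k ∈ M, r = (absMod (c * k) m : ℝ)} / m}

/-- Upper asymptotic density of a set of nonnegative integers. -/
noncomputable def upperDensity (S : Set ℕ) : ℝ :=
  Filter.limsup (fun x : ℕ => ((S ∩ Set.Iic x).ncard : ℝ) / x) Filter.atTop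

/-- Motzkin's maximal density μ(M) over all M-sets. -/
noncomputable def mu (M : Set ℕ) : ℝ :=
  sSup {d : ℝ | ∃ S : Set ℕ, isMSet M S ∧ d = upperDensity S}

lemma absMod_le (y m : ℕ) : absMod y m ≤ m :=
  le_trans (min_le_right _ _) (Nat.sub_le _ _)

theorem stmt12 (a n m x : ℕ) (ha : 2 ≤ a) (ha4 : a % 4 = 2)
    (hn4 : n % 4 = 0) (hn : 6*a < n)
    (hm : m = 2*a+n+1) (hx : x = (m-1)/4) :
    min (min (absMod (a*x) m) (absMod ((a+1)*x) m))
      (min (absMod ((2*a+1)*x) m)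
        (min (absMod ((3*a+1)*x) m) (absMod (n*x) m))) = (m-(2*a+1))/4 ∧
    kappa {a, a+1, 2*a+1, 3*a+1, n} ≥ ((m-(2*a+1) : ℕ) : ℝ) / (4*(2*a+n+1)) := by
  obtain ⟨s, hs⟩ : ∃ s, a = 4*s+2 := ⟨a/4, by omega⟩
  obtain ⟨t, ht⟩ : ∃ t, n = 4*t := ⟨n/4, by omega⟩
  have hm' : m = 8*s+4*t+5 := by omega
  have hx' : x = 2*s+t+1 := by omega
  have hst : 6*s+4 ≤ t := by omega
  have hmpos : 0 < m := by omega
  -- mod computations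
  have e1 : a*x % m = 3*s+2*t+2 := by
    have h : a*x = (3*s+2*t+2) + s*m := by rw [hs, hx', hm']; ring
    rw [h, Nat.add_mul_mod_self_right, Nat.mod_eq_of_lt (by omega)]
  have e2 : (a+1)*x % m = 5*s+3*t+3 := by
    have h : (a+1)*x = (5*s+3*t+3) + s*m := by rw [hs, hx', hm']; ring
    rw [h, Nat.add_mul_mod_self_right, Nat.mod_eq_of_lt (by omega)]
  have e3 : (2*a+1)*x % m = t := by
    have h : (2*a+1)*x = t + (2*s+1)*m := by rw [hs, hx', hm']; ring
    rw [h, Nat.add_mul_mod_self_right, Nat.mod_eq_of_lt (by omega)]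
  have e4 : (3*a+1)*x % m = 3*s+3*t+2 := by
    have h : (3*a+1)*x = (3*s+3*t+2) + (3*s+1)*m := by rw [hs, hx', hm']; ring
    rw [h, Nat.add_mul_mod_self_right, Nat.mod_eq_of_lt (by omega)]
  have e5 : n*x % m = 8*s+3*t+5 := by
    have h : n*x + m = (8*s+3*t+5) + t*m := by rw [ht, hx', hm']; ring
    have h2 : n*x % m = (n*x + m) % m := (Nat.add_mod_right _ _).symm
    rw [h2, h, Nat.add_mul_mod_self_right, Nat.mod_eq_of_lt (by omega)]
  constructor
  · simp only [absMod, e1, e2, e3, e4, e5]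
    omega
  · -- kappa lower bound, witness c = x
    set M : Set ℕ := {a, a+1, 2*a+1, 3*a+1, n} with hM
    have hcop : Nat.Coprime x m := by
      have h : m = 1 + 4*x := by omega
      rw [Nat.Coprime, h, Nat.gcd_add_mul_right_right, Nat.gcd_one_right]
    set S : Set ℝ := {r : ℝ | ∃ k ∈ M, r = (absMod (x * k) m : ℝ)} with hS
    -- every element of S is ≥ t
    have hlb : ∀ r ∈ S, (t : ℝ) ≤ r := by
      rintro r ⟨k, hk, rfl⟩
      have : t ≤ absMod (x * k) m := by
        simp only [hM, Set.mem_insert_iff, Set.mem_singleton_iff] at hk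
        rcases hk with rfl | rfl | rfl | rfl | rfl
        · unfold absMod; rw [mul_comm, e1]; omega
        · unfold absMod; rw [mul_comm, e2]; omega
        · unfold absMod; rw [mul_comm, e3]; omega
        · unfold absMod; rw [mul_comm, e4]; omega
        · unfold absMod; rw [mul_comm, e5]; omega
      exact_mod_cast this
    have habs3 : absMod (x * (2*a+1)) m = t := by
      unfold absMod; rw [mul_comm, e3]; omega
    have hmemS : (t : ℝ) ∈ S := by
      exact ⟨2*a+1, by simp [hM], by rw [habs3]⟩
    have hSne : S.Nonempty := ⟨_, hmemS⟩
    have hSbdd : BddBelow S := ⟨0, by rintro r ⟨k, hk, rfl⟩; positivity⟩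
    have hsInf : sInf S = (t : ℝ) :=
      le_antisymm (csInf_le hSbdd hmemS) (le_csInf hSne hlb)
    -- the kappa set
    set K : Set ℝ := {q : ℝ | ∃ c m' : ℕ, 0 < m' ∧ Nat.Coprime c m' ∧
      q = sInf {r : ℝ | ∃ k ∈ M, r = (absMod (c * k) m' : ℝ)} / m'} with hK
    have hKbdd : BddAbove K := by
      refine ⟨1, ?_⟩
      rintro q ⟨c, m', hm'pos, -, rfl⟩
      set T : Set ℝ := {r : ℝ | ∃ k ∈ M, r = (absMod (c * k) m' : ℝ)} with hT
      have hTbdd : BddBelow T := ⟨0, by rintro r ⟨k, hk, rfl⟩; positivity⟩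
      have hmemT : ((absMod (c * a) m' : ℕ) : ℝ) ∈ T := ⟨a, by simp [hM], rfl⟩
      have h1 : sInf T ≤ (m' : ℝ) := by
        refine le_trans (csInf_le hTbdd hmemT) ?_
        exact_mod_cast absMod_le (c*a) m'
      have hm'R : (0:ℝ) < m' := by exact_mod_cast hm'pos
      calc sInf T / m' ≤ (m':ℝ) / m' := by gcongr
          _ = 1 := div_self (ne_of_gt hm'R)
    have hmemK : sInf S / (m : ℝ) ∈ K := ⟨x, m, hmpos, hcop, rfl⟩
    have hle : sInf S / (m : ℝ) ≤ kappa M := le_csSup hKbdd hmemK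
    rw [hsInf] at hle
    have heq : ((m - (2*a+1) : ℕ) : ℝ) / (4*(2*(a:ℝ)+(n:ℝ)+1)) = (t:ℝ)/(m:ℝ) := by
      have h1 : m - (2*a+1) = 4*t := by omega
      rw [h1, hm]
      push_cast
      rw [div_eq_div_iff (by positivity) (by positivity)]
      ring
    rw [ge_iff_le, heq]
    exact hle
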